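/- arXiv:0911.5367 — 5 statements merged into one kernel-verified Lean document; each statement's English description precedes it below -/
import Mathlib

section
/- A symmetric function k : X × X → ℝ on a nonempty set X is a positive definite kernel if and only if there exist a type T and a mapping φ from X to ℓ²(T), the space of real families (u_t)_{t∈T} with ∑_{t∈T} |u_t|² < ∞, such that for all x, y ∈ X, k(x,y) = ∑_{t∈T} φ(x)_t φ(y)_t = ⟨φ(x), φ(y)⟩_{ℓ²(T)}. -/
open scoped RealInnerProductSpace

/-- A symmetric function `k : X × X → ℝ` is a positive definite kernel on `X` if
`∑ᵢⱼ cᵢ cⱼ k(xᵢ,xⱼ) ≥ 0` for all finite families of points and real coefficients. -/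
def IsPosDefKernel {X : Type*} (k : X → X → ℝ) : Prop :=
  (∀ x y, k x y = k y x) ∧
  ∀ (n : ℕ) (x : Fin n → X) (c : Fin n → ℝ),
    0 ≤ ∑ i, ∑ j, c i * c j * k (x i) (x j)

/-!
A Gram kernel `(x, y) ↦ ⟪φ x, φ y⟫` is positive definite because `∑ᵢⱼ cᵢ cⱼ ⟪φ xᵢ, φ xⱼ⟫` is the
squared norm of `∑ᵢ cᵢ φ xᵢ`. Conversely, Moore's theorem turns a positive definite kernel `k`
into the reproducing kernel Hilbert space `H` with kernel functions `kₓ` satisfying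
`⟪kₓ, k_y⟫ = k x y`, and the coordinates of `kₓ` in a Hilbert basis of `H` are a feature map
into `ℓ²`.
-/

theorem lp.real_inner_eq_tsum {T : Type*} (f g : lp (fun _ : T => ℝ) 2) :
    ⟪f, g⟫ = ∑' t, f t * g t := by
  simp only [lp.inner_eq_tsum, Real.inner_apply]

theorem isPosDefKernel_inner {X E : Type*} [SeminormedAddCommGroup E] [InnerProductSpace ℝ E]
    (φ : X → E) : IsPosDefKernel fun x y => ⟪φ x, φ y⟫ := by
  refine ⟨fun x y => real_inner_comm _ _, fun n x c => ?_⟩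
  calc 0 ≤ ⟪∑ i, c i • φ (x i), ∑ j, c j • φ (x j)⟫ := real_inner_self_nonneg
    _ = _ := by
      rw [sum_inner]
      simp only [inner_sum, real_inner_smul_left, real_inner_smul_right]
      exact Finset.sum_congr rfl fun i _ => Finset.sum_congr rfl fun j _ => by ring

section

variable {X : Type*} {k : X → X → ℝ}

/-- Mathlib's reproducing kernel Hilbert spaces have operator-valued kernels: a real kernel `k` is
encoded by the multiplication operators `v ↦ k x y * v` on `ℝ`. -/
noncomputable def kernelOpMatrix (k : X → X → ℝ) : Matrix X X (ℝ →L[ℝ] ℝ) :=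
  .of fun x y => k x y • (1 : ℝ →L[ℝ] ℝ)

theorem inner_kerFun_ofKernel [Fact (kernelOpMatrix k).PosSemidef] (x y : X) :
    ⟪RKHS.kerFun (RKHS.OfKernel (kernelOpMatrix k)) x 1,
      RKHS.kerFun (RKHS.OfKernel (kernelOpMatrix k)) y 1⟫ = k y x := by
  rw [← RKHS.kernel_inner, RKHS.OfKernel.kernel_ofKernel]
  simp [kernelOpMatrix]

namespace IsPosDefKernel

theorem sum_nonneg (hk : IsPosDefKernel k) {ι : Type*} [Fintype ι] (x : ι → X) (c : ι → ℝ) :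
    0 ≤ ∑ i, ∑ j, c i * c j * k (x i) (x j) := by
  let e := (Fintype.equivFin ι).symm
  calc 0 ≤ _ := hk.2 _ (x ∘ e) (c ∘ e)
    _ = _ := Fintype.sum_equiv e _ _ fun i => Fintype.sum_equiv e _ _ fun j => by rfl

theorem finsupp_sum_nonneg (hk : IsPosDefKernel k) (c : X →₀ ℝ) :
    0 ≤ c.sum fun x a => c.sum fun y b => a * b * k x y := by
  convert hk.sum_nonneg ((↑) : c.support → X) (c ·) using 1
  rw [Finsupp.sum, ← Finset.sum_coe_sort]
  congr! 2 with x
  rw [Finsupp.sum, ← Finset.sum_coe_sort]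

theorem posSemidef_kernelOpMatrix (hk : IsPosDefKernel k) : (kernelOpMatrix k).PosSemidef := by
  have tfae := (RKHS.posSemidef_tfae (K := kernelOpMatrix k)).out 2 0
  refine tfae.mp ⟨?_, fun c => ?_⟩
  · refine Matrix.IsHermitian.ext fun x y => ?_
    simp [kernelOpMatrix, hk.1 x y]
  · rw [Finsupp.sum_comm]
    simpa [kernelOpMatrix, mul_comm, mul_left_comm, mul_assoc] using hk.finsupp_sum_nonneg c

end IsPosDefKernel

end

theorem posdef_iff_exists_l2_feature_map_general
    {X : Type u} (k : X → X → ℝ) :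
    IsPosDefKernel k ↔
      ∃ (T : Type u) (φ : X → lp (fun _ : T => ℝ) 2),
        ∀ x y, k x y = ∑' t : T, φ x t * φ y t ∧ k x y = ⟪φ x, φ y⟫ := by
  constructor
  · intro hk
    have : Fact (kernelOpMatrix k).PosSemidef := ⟨hk.posSemidef_kernelOpMatrix⟩
    let H := RKHS.OfKernel (kernelOpMatrix k)
    obtain ⟨T, b, -⟩ := exists_hilbertBasis ℝ H
    refine ⟨T, fun x => b.repr (RKHS.kerFun H x 1), fun x y => ?_⟩
    have hk_inner : k x y = ⟪b.repr (RKHS.kerFun H x 1), b.repr (RKHS.kerFun H y 1)⟫ := by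
      rw [b.repr.inner_map_map, inner_kerFun_ofKernel, hk.1]
    exact ⟨hk_inner.trans (lp.real_inner_eq_tsum _ _), hk_inner⟩
  · rintro ⟨T, φ, hφ⟩
    have hk_gram : k = fun x y => ⟪φ x, φ y⟫ := funext₂ fun x y => (hφ x y).2
    exact hk_gram ▸ isPosDefKernel_inner φ

theorem posdef_iff_exists_l2_feature_map
    {X : Type u} [Nonempty X] (k : X → X → ℝ) (hsym : ∀ x y, k x y = k y x) :
    IsPosDefKernel k ↔
      ∃ (T : Type u) (φ : X → lp (fun _ : T => ℝ) 2),
        ∀ x y, k x y = ∑' t : T, φ x t * φ y t ∧ k x y = ⟪φ x, φ y⟫ :=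
  posdef_iff_exists_l2_feature_map_general k
end

section
/- Let X be a nonempty set and ψ : X × X → ℝ a symmetric function. Then ψ is a negative definite kernel on X if and only if for every t > 0 the function (x,y) ↦ exp(−t·ψ(x,y)) is a positive definite kernel on X. -/
/-- A symmetric function `ψ : X × X → ℝ` is a negative definite kernel on `X` if
`∑ᵢⱼ cᵢ cⱼ ψ(xᵢ,xⱼ) ≤ 0` for all finite families of points and real coefficients
summing to zero. -/
def IsNegDefKernel {X : Type*} (ψ : X → X → ℝ) : Prop :=
  (∀ x y, ψ x y = ψ y x) ∧
  ∀ (n : ℕ) (x : Fin n → X) (c : Fin n → ℝ), (∑ i, c i) = 0 →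
    ∑ i, ∑ j, c i * c j * ψ (x i) (x j) ≤ 0


/-!
Negative definiteness of `ψ`, tested on the points `x₀, x₁, …, xₙ` with weights
`-∑ cᵢ, c₁, …, cₙ`, makes the centered kernel
`φ(x, y) = ψ(x, x₀) + ψ(y, x₀) - ψ(x, y) - ψ(x₀, x₀)` positive definite. By the Schur product
theorem positive definite kernels are closed under products, hence under `exp` through its power
series, and `exp(-t ψ(x, y)) = f(x) f(y) exp(t φ(x, y))` with
`f(x) = exp(-t ψ(x, x₀) + t ψ(x₀, x₀) / 2)`.

Conversely, if `∑ cᵢ = 0` then `g(t) = ∑ cᵢ cⱼ exp(-t ψ(xᵢ, xⱼ))` vanishes at `0` and is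
nonnegative for `t > 0`, so `g'(0) = -∑ cᵢ cⱼ ψ(xᵢ, xⱼ) ≥ 0`.
-/

open Matrix

namespace Matrix.PosSemidef

variable {ι : Type*} [Fintype ι] {A : Matrix ι ι ℝ}

theorem map_pow (hA : A.PosSemidef) (m : ℕ) : (A.map (· ^ m)).PosSemidef := by
  induction m with
  | zero =>
    convert posSemidef_vecMulVec_self_star (1 : ι → ℝ) using 1
    ext; simp [vecMulVec]
  | succ m ih =>
    have hsucc : A.map (· ^ (m + 1)) = A.map (· ^ m) ⊙ A := by ext; simp [pow_succ]
    rw [hsucc]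
    exact ih.hadamard hA

theorem map_exp (hA : A.PosSemidef) : (A.map Real.exp).PosSemidef := by
  refine of_dotProduct_mulVec_nonneg (hA.isHermitian.map Real.exp fun _ => rfl) fun c => ?_
  have hexp (i j : ι) : HasSum (fun m : ℕ => c i * (A i j ^ m / m.factorial * c j))
      (c i * (Real.exp (A i j) * c j)) :=
    ((Real.exp_eq_exp_ℝ ▸ NormedSpace.expSeries_div_hasSum_exp (A i j)).mul_right _).mul_left _
  have hquad : HasSum (fun m : ℕ => star c ⬝ᵥ (A.map (· ^ m) *ᵥ c) / m.factorial)
      (star c ⬝ᵥ (A.map Real.exp *ᵥ c)) := by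
    convert hasSum_sum (s := Finset.univ) fun i _ =>
      hasSum_sum (s := Finset.univ) fun j _ => hexp i j using 1
    · ext m
      simp [dotProduct, mulVec, Finset.sum_div, Finset.mul_sum, div_mul_eq_mul_div, mul_div_assoc]
    · simp [dotProduct, mulVec, Finset.mul_sum]
  exact hquad.nonneg fun m => div_nonneg ((hA.map_pow m).dotProduct_mulVec_nonneg c) (by positivity)

end Matrix.PosSemidef

section Kernel

variable {X : Type*} {k l : X → X → ℝ}

theorem isPosDefKernel_iff_posSemidef_submatrix :
    IsPosDefKernel k ↔ ∀ n (x : Fin n → X), ((Matrix.of k).submatrix x x).PosSemidef := by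
  have hquad (n : ℕ) (x : Fin n → X) (c : Fin n → ℝ) :
      star c ⬝ᵥ ((Matrix.of k).submatrix x x *ᵥ c) = ∑ i, ∑ j, c i * c j * k (x i) (x j) := by
    simp only [dotProduct, mulVec, star_trivial, Finset.mul_sum]
    refine Finset.sum_congr rfl fun i _ => Finset.sum_congr rfl fun j _ => ?_
    simp only [submatrix_apply, of_apply]
    ring
  constructor
  · rintro ⟨hsymm, hk⟩ n x
    refine .of_dotProduct_mulVec_nonneg ?_ fun c => hquad n x c ▸ hk n x c
    ext i j
    simp [hsymm]
  · intro hk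
    refine ⟨fun x y => ?_, fun n x c => hquad n x c ▸ (hk n x).dotProduct_mulVec_nonneg c⟩
    simpa using ((hk 2 ![y, x]).isHermitian.apply 0 1)

namespace IsPosDefKernel

theorem mul (hk : IsPosDefKernel k) (hl : IsPosDefKernel l) :
    IsPosDefKernel fun x y => k x y * l x y := by
  rw [isPosDefKernel_iff_posSemidef_submatrix] at *
  exact fun n x => (hk n x).hadamard (hl n x)

theorem const_mul (hk : IsPosDefKernel k) {t : ℝ} (ht : 0 ≤ t) :
    IsPosDefKernel fun x y => t * k x y := by
  rw [isPosDefKernel_iff_posSemidef_submatrix] at *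
  exact fun n x => (hk n x).smul ht

theorem exp (hk : IsPosDefKernel k) : IsPosDefKernel fun x y => Real.exp (k x y) := by
  rw [isPosDefKernel_iff_posSemidef_submatrix] at *
  exact fun n x => (hk n x).map_exp

end IsPosDefKernel

theorem isPosDefKernel_mul_self (f : X → ℝ) : IsPosDefKernel fun x y => f x * f y := by
  refine ⟨fun x y => mul_comm _ _, fun n x c => ?_⟩
  have hsq : ∑ i, ∑ j, c i * c j * (f (x i) * f (x j)) = (∑ i, c i * f (x i)) ^ 2 := by
    rw [sq, Finset.sum_mul_sum]
    exact Finset.sum_congr rfl fun i _ => Finset.sum_congr rfl fun j _ => by ring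
  exact hsq ▸ sq_nonneg _

end Kernel

theorem HasDerivWithinAt.nonneg_of_isMinOn_Ioi {g : ℝ → ℝ} {g' a : ℝ}
    (hg : HasDerivWithinAt g g' (Set.Ioi a) a) (hmin : IsMinOn g (Set.Ioi a) a) : 0 ≤ g' := by
  refine ge_of_tendsto ((hasDerivWithinAt_iff_tendsto_slope' Set.self_notMem_Ioi).mp hg) ?_
  filter_upwards [self_mem_nhdsWithin] with t ht
  rw [slope_def_field]
  exact div_nonneg (sub_nonneg.mpr (hmin ht)) (sub_nonneg.mpr (le_of_lt ht))

namespace IsNegDefKernel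

variable {X : Type*} {ψ : X → X → ℝ}

theorem isPosDefKernel_centered (hψ : IsNegDefKernel ψ) (x₀ : X) :
    IsPosDefKernel fun x y => ψ x x₀ + ψ y x₀ - ψ x y - ψ x₀ x₀ := by
  refine ⟨fun x y => by simp only [hψ.1 x y]; ring, fun n x c => ?_⟩
  have h := hψ.2 (n + 1) (Fin.cons x₀ x) (Fin.cons (-∑ i, c i) c) (by simp [Fin.sum_cons])
  simp only [Fin.sum_univ_succ, Fin.cons_zero, Fin.cons_succ, hψ.1 x₀] at h
  simp only [mul_add, mul_sub, Finset.sum_add_distrib, Finset.sum_sub_distrib, neg_mul, mul_neg,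
    Finset.sum_neg_distrib, mul_assoc, mul_left_comm _ (∑ i, c i), ← Finset.mul_sum,
    ← Finset.sum_mul] at h ⊢
  linarith

theorem isPosDefKernel_exp_neg_mul [Nonempty X] (hψ : IsNegDefKernel ψ) {t : ℝ} (ht : 0 ≤ t) :
    IsPosDefKernel fun x y => Real.exp (-t * ψ x y) := by
  obtain ⟨x₀⟩ := ‹Nonempty X›
  let f x := Real.exp (-t * ψ x x₀ + t * ψ x₀ x₀ / 2)
  convert (isPosDefKernel_mul_self f).mul ((hψ.isPosDefKernel_centered x₀).const_mul ht).exp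
    using 2 with x y
  simp only [f, ← Real.exp_add]
  ring_nf

theorem of_forall_isPosDefKernel_exp
    (h : ∀ t : ℝ, 0 < t → IsPosDefKernel fun x y => Real.exp (-t * ψ x y)) :
    IsNegDefKernel ψ := by
  refine ⟨fun x y => by simpa using (h 1 one_pos).1 x y, fun n x c hc => ?_⟩
  let g t := ∑ i, ∑ j, c i * c j * Real.exp (-t * ψ (x i) (x j))
  have hg0 : g 0 = 0 := by simp [g, ← Finset.sum_mul_sum, hc]
  have hg : HasDerivAt g (∑ i, ∑ j, c i * c j * -ψ (x i) (x j)) 0 := by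
    refine HasDerivAt.fun_sum fun i _ => HasDerivAt.fun_sum fun j _ => ?_
    simpa using (((hasDerivAt_id 0).neg.mul_const (ψ (x i) (x j))).exp).const_mul (c i * c j)
  have hmin : IsMinOn g (Set.Ioi 0) 0 := fun t ht => hg0.trans_le ((h t ht).2 n x c)
  simpa using hg.hasDerivWithinAt.nonneg_of_isMinOn_Ioi hmin

end IsNegDefKernel

theorem schoenberg_negdef_iff_exp_posdef_general
    {X : Type*} [Nonempty X] (ψ : X → X → ℝ) :
    IsNegDefKernel ψ ↔
      ∀ t : ℝ, 0 < t → IsPosDefKernel (fun x y => Real.exp (-t * ψ x y)) :=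
  ⟨fun hψ _ ht => hψ.isPosDefKernel_exp_neg_mul ht.le, IsNegDefKernel.of_forall_isPosDefKernel_exp⟩

theorem schoenberg_negdef_iff_exp_posdef
    {X : Type*} [Nonempty X] (ψ : X → X → ℝ) (hsym : ∀ x y, ψ x y = ψ y x) :
    IsNegDefKernel ψ ↔
      ∀ t : ℝ, 0 < t → IsPosDefKernel (fun x y => Real.exp (-t * ψ x y)) :=
  schoenberg_negdef_iff_exp_posdef_general ψ
end

section
/- Let X be a nonempty set and ψ : X × X → ℝ a negative definite kernel. Then there exist a real Hilbert space H, a mapping φ : X → H, and a function f : X → ℝ such that for all x, y ∈ X, ψ(x,y) = ‖φ(x) − φ(y)‖² + f(x) + f(y). Moreover, if ψ(x,x) = 0 for all x ∈ X, then f can be chosen to be identically zero. -/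
open Finset
open scoped InnerProductSpace

universe u

theorem Matrix.PosSemidef.exists_inner_eq {X : Type u} {k : Matrix X X ℝ} (hk : k.PosSemidef) :
    ∃ (H : Type u) (_ : NormedAddCommGroup H) (_ : InnerProductSpace ℝ H) (_ : CompleteSpace H)
      (φ : X → H), ∀ x y, ⟪φ x, φ y⟫_ℝ = k x y := by
  have hsymm (x y : X) : k y x = k x y := by simpa using hk.isHermitian.apply x y
  -- `RKHS.OfKernel` takes operator-valued kernels: let `k x y` act on `ℝ` by multiplication.
  set K : Matrix X X (ℝ →L[ℝ] ℝ) := k.map fun a ↦ a • 1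
  have hK : K.PosSemidef := by
    have criterion := (RKHS.posSemidef_tfae (K := K)).out 0 2
    refine criterion.2 ⟨?_, fun c ↦ ?_⟩
    · ext i j : 1
      simp [K, Matrix.conjTranspose_apply, hsymm]
    · refine (hk.2 c).trans_eq ?_
      simp only [star_trivial, map_apply, _root_.smul_apply, one_apply_eq_self, smul_eq_mul,
        RCLike.inner_apply, Real.ringHom_apply, RCLike.re_to_real, K]
      rw [Finsupp.sum_comm]
      simp only [mul_assoc]
  have : Fact K.PosSemidef := ⟨hK⟩
  refine ⟨RKHS.OfKernel K, inferInstance, inferInstance, inferInstance,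
    fun x ↦ RKHS.kerFun (RKHS.OfKernel K) x 1, fun x y ↦ ?_⟩
  simpa [RKHS.kerFun_apply, K] using hsymm x y

/-- If `ψ x y = ‖φ x - φ y‖²`, this is `⟪φ x - φ x₀, φ y - φ x₀⟫`. -/
noncomputable def centeredKernel {X : Type*} (ψ : X → X → ℝ) (x₀ : X) : Matrix X X ℝ :=
  Matrix.of fun x y ↦ (ψ x x₀ + ψ y x₀ - ψ x y - ψ x₀ x₀) / 2

namespace IsNegDefKernel

variable {X : Type*} {ψ : X → X → ℝ}

theorem sum_le_zero (hψ : IsNegDefKernel ψ) {ι : Type*} [Fintype ι] (x : ι → X) (c : ι → ℝ)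
    (hc : ∑ i, c i = 0) : ∑ i, ∑ j, c i * c j * ψ (x i) (x j) ≤ 0 := by
  let e := (Fintype.equivFin ι).symm
  calc ∑ i, ∑ j, c i * c j * ψ (x i) (x j)
      = ∑ i, ∑ j, c (e i) * c (e j) * ψ (x (e i)) (x (e j)) := by
        rw [← e.sum_comp]
        exact sum_congr rfl fun i _ ↦ (e.sum_comp _).symm
    _ ≤ 0 := hψ.2 _ (x ∘ e) (c ∘ e) (by rwa [Function.comp_def, e.sum_comp])

theorem sum_centeredKernel_nonneg (hψ : IsNegDefKernel ψ) (x₀ : X) {ι : Type*} [Fintype ι]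
    (x : ι → X) (c : ι → ℝ) : 0 ≤ ∑ i, ∑ j, c i * c j * centeredKernel ψ x₀ (x i) (x j) := by
  set S := ∑ i, c i
  set B := ∑ i, c i * ψ (x i) x₀
  have h := hψ.sum_le_zero (fun o : Option ι ↦ o.elim x₀ x) (fun o ↦ o.elim (-S) c)
    (by simp [Fintype.sum_option, S])
  simp only [Fintype.sum_option, Option.elim_none, Option.elim_some] at h
  have hSS : ∑ i, ∑ j, c i * c j * ψ x₀ x₀ = S * S * ψ x₀ x₀ := by
    rw [sum_mul_sum, sum_mul]
    simp only [sum_mul]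
  have hBS : ∑ i, ∑ j, c i * c j * ψ (x i) x₀ = B * S := by
    rw [sum_mul_sum]
    exact sum_congr rfl fun i _ ↦ sum_congr rfl fun j _ ↦ by ring
  have hSB : ∑ i, ∑ j, c i * c j * ψ (x j) x₀ = S * B := by
    rw [sum_mul_sum]
    exact sum_congr rfl fun i _ ↦ sum_congr rfl fun j _ ↦ by ring
  have hB₀ : ∑ i, -S * c i * ψ x₀ (x i) = -S * B := by
    rw [mul_sum]
    exact sum_congr rfl fun i _ ↦ by rw [hψ.1]; ring
  have hB : ∑ i, c i * -S * ψ (x i) x₀ = -S * B := by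
    rw [mul_sum]
    exact sum_congr rfl fun i _ ↦ by ring
  simp only [centeredKernel, Matrix.of_apply, mul_div_assoc', ← sum_div, mul_sub, mul_add,
    sum_add_distrib, sum_sub_distrib, hSS, hBS, hSB]
  rw [sum_add_distrib, hB, hB₀] at h
  linarith

theorem centeredKernel_posSemidef (hψ : IsNegDefKernel ψ) (x₀ : X) :
    (centeredKernel ψ x₀).PosSemidef := by
  refine ⟨?_, fun c ↦ ?_⟩
  · ext x y
    simp only [Matrix.conjTranspose_apply, centeredKernel, Matrix.of_apply, star_trivial, hψ.1 x y]
    ring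
  · refine (hψ.sum_centeredKernel_nonneg x₀ ((↑) : c.support → X) (c ·)).trans_eq ?_
    simp only [Finsupp.sum, ← sum_coe_sort c.support, star_trivial]
    exact sum_congr rfl fun x _ ↦ sum_congr rfl fun y _ ↦ mul_right_comm _ _ _

theorem eq_norm_sub_sq_of_inner_eq_centeredKernel (hψ : IsNegDefKernel ψ) {x₀ : X}
    {H : Type*} [NormedAddCommGroup H] [InnerProductSpace ℝ H] {φ : X → H}
    (hφ : ∀ x y, ⟪φ x, φ y⟫_ℝ = centeredKernel ψ x₀ x y) (x y : X) :
    ψ x y = ‖φ x - φ y‖ ^ 2 + ψ x x / 2 + ψ y y / 2 := by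
  rw [norm_sub_sq_real, ← real_inner_self_eq_norm_sq, ← real_inner_self_eq_norm_sq, hφ, hφ, hφ]
  simp only [centeredKernel, Matrix.of_apply, hψ.1 y x₀]
  ring

end IsNegDefKernel

theorem IsNegDefKernel.exists_eq_norm_sub_sq {X : Type u} [Nonempty X] {ψ : X → X → ℝ}
    (hψ : IsNegDefKernel ψ) :
    ∃ (H : Type u) (_ : NormedAddCommGroup H) (_ : InnerProductSpace ℝ H) (_ : CompleteSpace H)
      (φ : X → H), ∀ x y, ψ x y = ‖φ x - φ y‖ ^ 2 + ψ x x / 2 + ψ y y / 2 := by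
  obtain ⟨x₀⟩ := ‹Nonempty X›
  obtain ⟨H, _, _, _, φ, hφ⟩ := (hψ.centeredKernel_posSemidef x₀).exists_inner_eq
  exact ⟨H, inferInstance, inferInstance, inferInstance, φ,
    hψ.eq_norm_sub_sq_of_inner_eq_centeredKernel hφ⟩

theorem negdef_hilbert_decomposition
    {X : Type u} [Nonempty X] (ψ : X → X → ℝ) (hψ : IsNegDefKernel ψ) :
    (∃ (H : Type u) (_ : NormedAddCommGroup H) (_ : InnerProductSpace ℝ H)
        (_ : CompleteSpace H) (φ : X → H) (f : X → ℝ),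
      ∀ x y, ψ x y = ‖φ x - φ y‖ ^ 2 + f x + f y) ∧
    ((∀ x, ψ x x = 0) →
      ∃ (H : Type u) (_ : NormedAddCommGroup H) (_ : InnerProductSpace ℝ H)
          (_ : CompleteSpace H) (φ : X → H),
        ∀ x y, ψ x y = ‖φ x - φ y‖ ^ 2) := by
  obtain ⟨H, _, _, _, φ, hφ⟩ := hψ.exists_eq_norm_sub_sq
  refine ⟨⟨H, inferInstance, inferInstance, inferInstance, φ, fun x ↦ ψ x x / 2, hφ⟩,
    fun hdiag ↦ ⟨H, inferInstance, inferInstance, inferInstance, φ, fun x y ↦ ?_⟩⟩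
  simpa [hdiag] using hφ x y
end

section
/- Let X be a nonempty set and ψ : X × X → ℝ a negative definite kernel with ψ ≥ 0 pointwise, such that the set of pairs (x,y) with ψ(x,y) = 0 is exactly the diagonal {(x,x) : x ∈ X}. Then the function d(x,y) = √(ψ(x,y)) is a distance on X: d(x,y) ≥ 0 with equality iff x = y, d(x,y) = d(y,x), and d(x,z) ≤ d(x,y) + d(y,z) for all x, y, z ∈ X. -/
namespace IsNegDefKernel

variable {X : Type*} {ψ : X → X → ℝ}

theorem three_point (hψ : IsNegDefKernel ψ) (hdiag : ∀ x, ψ x x = 0) (x y z : X)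
    {p q r : ℝ} (hpqr : p + q + r = 0) :
    p * q * ψ x y + p * r * ψ x z + q * r * ψ y z ≤ 0 := by
  have h := hψ.2 3 ![x, y, z] ![p, q, r] (by simpa [Fin.sum_univ_three] using hpqr)
  simp only [Fin.sum_univ_three, Matrix.cons_val_zero, Matrix.cons_val_one,
    Matrix.cons_val_two, Matrix.head_cons, Matrix.tail_cons, hdiag] at h
  rw [hψ.1 y x, hψ.1 z x, hψ.1 z y] at h
  linarith

theorem nonneg (hψ : IsNegDefKernel ψ) (hdiag : ∀ x, ψ x x = 0) (x y : X) : 0 ≤ ψ x y := by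
  have h := hψ.three_point hdiag x y y (p := 1) (q := -1) (r := 0) (by norm_num)
  rw [hdiag] at h
  linarith

theorem sqrt_mul_sqrt_mul_le (hψ : IsNegDefKernel ψ) (hdiag : ∀ x, ψ x x = 0) (x y z : X) :
    √(ψ x y) * √(ψ y z) * ψ x z ≤
      √(ψ x y) * √(ψ y z) * (√(ψ x y) + √(ψ y z)) ^ 2 := by
  set a := √(ψ x y)
  set b := √(ψ y z)
  have ha : a ^ 2 = ψ x y := Real.sq_sqrt (hψ.nonneg hdiag x y)
  have hb : b ^ 2 = ψ y z := Real.sq_sqrt (hψ.nonneg hdiag y z)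
  have h := hψ.three_point hdiag x y z (p := b) (q := -(a + b)) (r := a) (by ring)
  rw [← ha, ← hb] at h
  linear_combination h

theorem sqrt_le_sqrt_add_sqrt (hψ : IsNegDefKernel ψ) (hzero : ∀ x y, ψ x y = 0 ↔ x = y)
    (x y z : X) : √(ψ x z) ≤ √(ψ x y) + √(ψ y z) := by
  have hdiag : ∀ x, ψ x x = 0 := fun x => (hzero x x).2 rfl
  rcases eq_or_ne x y with rfl | hxy
  · simp [hdiag]
  rcases eq_or_ne y z with rfl | hyz
  · simp [hdiag]
  have hpos : 0 < √(ψ x y) * √(ψ y z) := by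
    apply mul_pos <;> rw [Real.sqrt_pos] <;>
      exact (hψ.nonneg hdiag _ _).lt_of_ne' (by rwa [Ne, hzero])
  rw [Real.sqrt_le_iff]
  exact ⟨by positivity, le_of_mul_le_mul_left (hψ.sqrt_mul_sqrt_mul_le hdiag x y z) hpos⟩

end IsNegDefKernel

theorem sqrt_negdef_is_distance_general
    {X : Type*} (ψ : X → X → ℝ) (hψ : IsNegDefKernel ψ)
    (hzero : ∀ x y, ψ x y = 0 ↔ x = y) :
    (∀ x y, 0 ≤ Real.sqrt (ψ x y)) ∧
    (∀ x y, Real.sqrt (ψ x y) = 0 ↔ x = y) ∧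
    (∀ x y, Real.sqrt (ψ x y) = Real.sqrt (ψ y x)) ∧
    (∀ x y z, Real.sqrt (ψ x z) ≤ Real.sqrt (ψ x y) + Real.sqrt (ψ y z)) := by
  have hdiag : ∀ x, ψ x x = 0 := fun x => (hzero x x).2 rfl
  refine ⟨fun x y => Real.sqrt_nonneg _, fun x y => ?_, fun x y => by rw [hψ.1],
    hψ.sqrt_le_sqrt_add_sqrt hzero⟩
  rw [Real.sqrt_eq_zero (hψ.nonneg hdiag x y), hzero]

theorem sqrt_negdef_is_distance
    {X : Type*} [Nonempty X] (ψ : X → X → ℝ) (hψ : IsNegDefKernel ψ)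
    (hnonneg : ∀ x y, 0 ≤ ψ x y)
    (hzero : ∀ x y, ψ x y = 0 ↔ x = y) :
    (∀ x y, 0 ≤ Real.sqrt (ψ x y)) ∧
    (∀ x y, Real.sqrt (ψ x y) = 0 ↔ x = y) ∧
    (∀ x y, Real.sqrt (ψ x y) = Real.sqrt (ψ y x)) ∧
    (∀ x y z, Real.sqrt (ψ x z) ≤ Real.sqrt (ψ x y) + Real.sqrt (ψ y z)) :=
  sqrt_negdef_is_distance_general ψ hψ hzero
end

section
/- (Representer theorem) Let H be a real Hilbert space, X a nonempty set, Φ : X → H, and x₁,…,xₙ ∈ X. Let Ψ : ℝⁿ × ℝ → ℝ be strictly increasing with respect to its last argument (i.e., for fixed v ∈ ℝⁿ, r < r' implies Ψ(v,r) < Ψ(v,r')). Then any minimizer f ∈ H of the functional f ↦ Ψ(⟨f, Φ(x₁)⟩, …, ⟨f, Φ(xₙ)⟩, ‖f‖) over H lies in the finite dimensional subspace span{Φ(x₁), …, Φ(xₙ)} of H. -/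
open scoped RealInnerProductSpace

namespace Submodule

section Projection

variable {𝕜 E : Type*} [RCLike 𝕜] [NormedAddCommGroup E] [InnerProductSpace 𝕜 E]
  (K : Submodule 𝕜 E) [K.HasOrthogonalProjection]

theorem norm_starProjection_lt_of_notMem {v : E} (hv : v ∉ K) :
    ‖K.starProjection v‖ < ‖v‖ :=
  (K.norm_starProjection_apply_le v).lt_of_ne
    fun h => hv ((K.mem_iff_norm_starProjection v).2 h)

theorem inner_starProjection_left_of_mem (v : E) {u : E} (hu : u ∈ K) :
    inner 𝕜 (K.starProjection v) u = inner 𝕜 v u := by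
  rw [inner_starProjection_left_eq_right, starProjection_eq_self_iff.2 hu]

end Projection

/-- Projecting onto `K` keeps every `⟪·, v i⟫` and strictly shrinks the norm of a vector outside
`K`, so it strictly decreases the functional. -/
theorem mem_of_minimizer_of_strictMono_norm {H ι : Type*} [NormedAddCommGroup H]
    [InnerProductSpace ℝ H] (K : Submodule ℝ H) [K.HasOrthogonalProjection] {v : ι → H}
    (hv : ∀ i, v i ∈ K) {Ψ : (ι → ℝ) → ℝ → ℝ} (hΨ : ∀ w, StrictMono (Ψ w)) {f : H}
    (hf : ∀ g : H, Ψ (fun i => ⟪f, v i⟫) ‖f‖ ≤ Ψ (fun i => ⟪g, v i⟫) ‖g‖) : f ∈ K := by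
  by_contra hfK
  have heval : (fun i => ⟪K.starProjection f, v i⟫) = fun i => ⟪f, v i⟫ :=
    funext fun i => K.inner_starProjection_left_of_mem f (hv i)
  have hmin := hf (K.starProjection f)
  rw [heval] at hmin
  exact (hΨ _ (K.norm_starProjection_lt_of_notMem hfK)).not_ge hmin

end Submodule

theorem representer_theorem_general
    {H : Type*} [NormedAddCommGroup H] [InnerProductSpace ℝ H]
    {X : Type*} (Φ : X → H) (n : ℕ) (x : Fin n → X)
    (Ψ : (Fin n → ℝ) → ℝ → ℝ)
    (hΨ : ∀ (v : Fin n → ℝ) (r r' : ℝ), r < r' → Ψ v r < Ψ v r')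
    (f : H)
    (hf : ∀ g : H, Ψ (fun i => ⟪f, Φ (x i)⟫) ‖f‖ ≤ Ψ (fun i => ⟪g, Φ (x i)⟫) ‖g‖) :
    f ∈ Submodule.span ℝ (Set.range fun i => Φ (x i)) := by
  have : FiniteDimensional ℝ (Submodule.span ℝ (Set.range fun i => Φ (x i))) :=
    FiniteDimensional.span_of_finite ℝ (Set.finite_range _)
  exact Submodule.mem_of_minimizer_of_strictMono_norm _
    (fun i => Submodule.subset_span (Set.mem_range_self i)) (fun v _ _ => hΨ v _ _) hf

/-- **Representer theorem.** Any minimizer over a real Hilbert space `H` of a functional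
of the evaluations `⟪f, Φ(xᵢ)⟫` which is strictly increasing in `‖f‖` lies in the span of
the feature vectors `Φ(x₁), …, Φ(xₙ)`. -/
theorem representer_theorem
    {H : Type*} [NormedAddCommGroup H] [InnerProductSpace ℝ H] [CompleteSpace H]
    {X : Type*} [Nonempty X] (Φ : X → H) (n : ℕ) (x : Fin n → X)
    (Ψ : (Fin n → ℝ) → ℝ → ℝ)
    (hΨ : ∀ (v : Fin n → ℝ) (r r' : ℝ), r < r' → Ψ v r < Ψ v r')
    (f : H)
    (hf : ∀ g : H, Ψ (fun i => ⟪f, Φ (x i)⟫) ‖f‖ ≤ Ψ (fun i => ⟪g, Φ (x i)⟫) ‖g‖) :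
    f ∈ Submodule.span ℝ (Set.range fun i => Φ (x i)) :=
  representer_theorem_general Φ n x Ψ hΨ f hf
end
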